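/- arXiv:1210.1266 — 3 statements merged into one kernel-verified Lean document; each statement's English description precedes it below -/
import Mathlib

section
/- Let X and Y be Polish spaces, μ a Borel probability measure on X, and d : X × Y → [0, ∞] a Borel measurable function such that for μ-almost every x the map y ↦ d(x, y) is continuous. Let (π_α) be a net of Borel probability measures on X × Y, each with first marginal μ, and let π be a Borel probability measure on X × Y with first marginal μ, such that ∫ φ dπ_α → ∫ φ dπ for every φ : X × Y → ℝ that is jointly measurable, bounded, continuous in y for each x, and satisfies ∫_X sup_y |φ(x,y)| μ(dx) < ∞. If ∫_{X×Y} d dπ_α ≤ D for every α, where D ∈ [0, ∞), then ∫_{X×Y} d dπ ≤ D. -/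
open MeasureTheory Filter Topology
open scoped ENNReal NNReal

/-- weak*-closedness of the average distortion constraint set. -/
theorem stmt_4
    {X Y : Type*}
    [TopologicalSpace X] [PolishSpace X] [MeasurableSpace X] [BorelSpace X]
    [TopologicalSpace Y] [PolishSpace Y] [MeasurableSpace Y] [BorelSpace Y]
    (μ : Measure X) [IsProbabilityMeasure μ]
    (d : X × Y → ℝ≥0∞) (hd : Measurable d)
    (hdc : ∀ᵐ x ∂μ, Continuous fun y => d (x, y))
    {ι : Type*} [Preorder ι] [IsDirected ι (· ≤ ·)] [Nonempty ι]
    (π : ι → Measure (X × Y)) [∀ α, IsProbabilityMeasure (π α)]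
    (hπfst : ∀ α, (π α).map Prod.fst = μ)
    (πlim : Measure (X × Y)) [IsProbabilityMeasure πlim]
    (hπlimfst : πlim.map Prod.fst = μ)
    (hconv : ∀ φ : X × Y → ℝ, Measurable φ → (∃ C, ∀ p, |φ p| ≤ C) →
      (∀ x, Continuous fun y => φ (x, y)) →
      Integrable (fun x => ⨆ y, |φ (x, y)|) μ →
      Tendsto (fun α => ∫ p, φ p ∂(π α)) atTop (𝓝 (∫ p, φ p ∂πlim)))
    (D : ℝ≥0∞) (hD : D ≠ ⊤)
    (hle : ∀ α, ∫⁻ p, d p ∂(π α) ≤ D) :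
    ∫⁻ p, d p ∂πlim ≤ D := by
  classical
  -- a measurable null set outside of which d is continuous in y
  set N : Set X := toMeasurable μ {x | ¬ Continuous fun y => d (x, y)} with hN
  have hNmeas : MeasurableSet N := measurableSet_toMeasurable _ _
  have hNnull : μ N = 0 := by
    rw [hN, measure_toMeasurable]
    exact hdc
  -- modified distortion
  set d' : X × Y → ℝ≥0∞ := fun p => if p.1 ∈ N then 0 else d p with hd'
  have hd'meas : Measurable d' :=
    Measurable.ite (measurable_fst hNmeas) measurable_const hd
  have hd'cont : ∀ x, Continuous fun y => d' (x, y) := by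
    intro x
    by_cases hx : x ∈ N
    · simpa [hd', hx] using continuous_const
    · have : Continuous fun y => d (x, y) := by
        by_contra h
        exact hx (subset_toMeasurable _ _ h)
      simpa [hd', hx] using this
  -- for any coupling ρ with first marginal μ, d' = d a.e.
  have key : ∀ ρ : Measure (X × Y), ρ.map Prod.fst = μ → d' =ᵐ[ρ] d := by
    intro ρ hρ
    have h0 : ρ (Prod.fst ⁻¹' N) = 0 := by
      rw [← Measure.map_apply measurable_fst hNmeas, hρ]; exact hNnull
    filter_upwards [measure_eq_zero_iff_ae_notMem.mp h0] with p hp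
    simp only [hd']
    exact if_neg hp
  -- truncated test functions
  set φ : ℕ → X × Y → ℝ := fun n p => (min (d' p) n).toReal with hφ
  have hmin_ne_top : ∀ (n : ℕ) p, min (d' p) (n : ℝ≥0∞) ≠ ⊤ := fun n p =>
    ne_top_of_le_ne_top (by simp) (min_le_right _ _)
  have hφmeas : ∀ n, Measurable (φ n) := fun n =>
    (hd'meas.min measurable_const).ennreal_toReal
  have hφnonneg : ∀ n p, 0 ≤ φ n p := fun n p => ENNReal.toReal_nonneg
  have hφbd : ∀ n p, |φ n p| ≤ (n : ℝ) := by
    intro n p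
    rw [abs_of_nonneg (hφnonneg n p)]
    calc (min (d' p) n).toReal ≤ ((n : ℝ≥0∞)).toReal :=
          ENNReal.toReal_mono (by simp) (min_le_right _ _)
      _ = (n : ℝ) := by simp
  have hφcont : ∀ n x, Continuous fun y => φ n (x, y) := by
    intro n x
    exact ENNReal.continuousOn_toReal.comp_continuous
      ((hd'cont x).min continuous_const) (fun y => hmin_ne_top n (x, y))
  -- integrability of the sup
  have hφint : ∀ n, Integrable (fun x => ⨆ y, |φ n (x, y)|) μ := by
    intro n
    by_cases hY : Nonempty Y
    · obtain ⟨u, hu⟩ := TopologicalSpace.exists_dense_seq Y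
      have heq : ∀ x, (⨆ y, |φ n (x, y)|)
          = (⨆ i, min (d' (x, u i)) n).toReal := by
        intro x
        have h1 : (⨆ i, min (d' (x, u i)) (n : ℝ≥0∞)) = ⨆ y, min (d' (x, y)) n := by
          refine le_antisymm
            (iSup_le fun i => le_iSup (fun y => min (d' (x, y)) (n : ℝ≥0∞)) (u i)) ?_
          refine iSup_le fun y => ?_
          have hcl : IsClosed {y | min (d' (x, y)) (n : ℝ≥0∞)
              ≤ ⨆ i, min (d' (x, u i)) n} :=
            isClosed_le ((hd'cont x).min continuous_const) continuous_const
          have hsub : Set.range u ⊆ {y | min (d' (x, y)) (n : ℝ≥0∞)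
              ≤ ⨆ i, min (d' (x, u i)) n} := by
            rintro _ ⟨i, rfl⟩
            exact le_iSup (fun i => min (d' (x, u i)) (n : ℝ≥0∞)) i
          have := hcl.closure_subset_iff.mpr hsub
          rw [hu.closure_range] at this
          exact this (Set.mem_univ y)
        rw [h1, ENNReal.toReal_iSup (fun y => hmin_ne_top n (x, y))]
        congr 1
        funext y
        rw [abs_of_nonneg (hφnonneg n (x, y))]
      have hmeas : Measurable fun x => (⨆ i, min (d' (x, u i)) (n : ℝ≥0∞)).toReal := by
        apply Measurable.ennreal_toReal
        exact Measurable.iSup fun i =>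
          (hd'meas.comp (measurable_id.prodMk measurable_const)).min measurable_const
      have hbdd : ∀ x, BddAbove (Set.range fun y => |φ n (x, y)|) := by
        intro x
        refine ⟨(n : ℝ), ?_⟩
        rintro _ ⟨y, rfl⟩
        exact hφbd n (x, y)
      refine Integrable.mono' (integrable_const (n : ℝ)) ?_ ?_
      · exact (funext heq ▸ hmeas.aestronglyMeasurable)
      · refine Filter.Eventually.of_forall fun x => ?_
        rw [Real.norm_eq_abs, abs_of_nonneg]
        · exact ciSup_le fun y => hφbd n (x, y)
        · obtain ⟨y⟩ := hY
          exact le_trans (abs_nonneg _) (le_ciSup (hbdd x) y)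
    · have : ∀ x : X, (⨆ y, |φ n (x, y)|) = 0 := by
        intro x
        rw [not_nonempty_iff] at hY
        exact Real.iSup_of_isEmpty _
      rw [funext this]
      exact integrable_const (0 : ℝ)
  -- uniform bound on integrals of φ n against π α
  have hτ : ∀ (n : ℕ) (ρ : Measure (X × Y)) [IsProbabilityMeasure ρ],
      ∫ p, φ n p ∂ρ = (∫⁻ p, min (d' p) n ∂ρ).toReal := by
    intro n ρ _
    exact integral_toReal ((hd'meas.min measurable_const)).aemeasurable
      (Filter.Eventually.of_forall fun p => lt_top_iff_ne_top.mpr (hmin_ne_top n p))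
  have hlin_lt_top : ∀ (n : ℕ) (ρ : Measure (X × Y)) [IsProbabilityMeasure ρ],
      ∫⁻ p, min (d' p) n ∂ρ ≠ ⊤ := by
    intro n ρ _
    refine ne_top_of_le_ne_top (ENNReal.natCast_ne_top n) ?_
    calc ∫⁻ p, min (d' p) n ∂ρ ≤ ∫⁻ _, (n : ℝ≥0∞) ∂ρ :=
          lintegral_mono fun p => min_le_right _ _
      _ = n := by simp
  have hbound : ∀ (n : ℕ) α, ∫ p, φ n p ∂(π α) ≤ D.toReal := by
    intro n α
    rw [hτ n (π α)]
    apply ENNReal.toReal_mono hD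
    calc ∫⁻ p, min (d' p) n ∂(π α) ≤ ∫⁻ p, d' p ∂(π α) :=
          lintegral_mono fun p => min_le_left _ _
      _ = ∫⁻ p, d p ∂(π α) := lintegral_congr_ae (key (π α) (hπfst α))
      _ ≤ D := hle α
  -- pass to the limit
  have hlim : ∀ n : ℕ, ∫⁻ p, min (d' p) n ∂πlim ≤ D := by
    intro n
    have htend := hconv (φ n) (hφmeas n) ⟨(n : ℝ), hφbd n⟩ (hφcont n) (hφint n)
    have hle' : ∫ p, φ n p ∂πlim ≤ D.toReal :=
      le_of_tendsto htend (Filter.Eventually.of_forall fun α => hbound n α)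
    rw [hτ n πlim] at hle'
    calc ∫⁻ p, min (d' p) n ∂πlim
        = ENNReal.ofReal (∫⁻ p, min (d' p) n ∂πlim).toReal :=
          (ENNReal.ofReal_toReal (hlin_lt_top n πlim)).symm
      _ ≤ ENNReal.ofReal D.toReal := ENNReal.ofReal_le_ofReal hle'
      _ = D := ENNReal.ofReal_toReal hD
  -- monotone convergence
  have hmono : ∫⁻ p, d' p ∂πlim = ⨆ n : ℕ, ∫⁻ p, min (d' p) n ∂πlim := by
    have : ∀ p, d' p = ⨆ n : ℕ, min (d' p) n := by
      intro p
      have : (⨆ n : ℕ, min (d' p) (n : ℝ≥0∞)) = min (d' p) (⨆ n : ℕ, (n : ℝ≥0∞)) := by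
        rw [eq_comm]
        exact Monotone.map_iSup_of_continuousAt
          (f := fun a : ℝ≥0∞ => min (d' p) a)
          (continuous_const.min continuous_id).continuousAt
          (fun a b hab => min_le_min le_rfl hab) (by simp)
      rw [this, ENNReal.iSup_natCast, min_top_right]
    calc ∫⁻ p, d' p ∂πlim = ∫⁻ p, ⨆ n : ℕ, min (d' p) (n : ℝ≥0∞) ∂πlim := by
          exact lintegral_congr fun p => this p
      _ = ⨆ n : ℕ, ∫⁻ p, min (d' p) n ∂πlim :=
          lintegral_iSup (fun n => hd'meas.min measurable_const)
            (fun m n hmn p => min_le_min le_rfl (by exact_mod_cast Nat.cast_le.mpr hmn))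
  calc ∫⁻ p, d p ∂πlim = ∫⁻ p, d' p ∂πlim :=
        (lintegral_congr_ae (key πlim hπlimfst)).symm
    _ = ⨆ n : ℕ, ∫⁻ p, min (d' p) n ∂πlim := hmono
    _ ≤ D := iSup_le hlim
end

section
/- Let X and Y be Polish spaces, μ a Borel probability measure on X, ν a Borel probability measure on Y, s ∈ ℝ, and ρ : X × Y → ℝ a Borel measurable function. Assume Z(x) = ∫_Y e^{s ρ(x,y)} ν(dy) ∈ (0, ∞) for μ-almost every x and that x ↦ log Z(x) is μ-integrable. Define the Markov kernel κ* by κ*(x)(dy) = e^{s ρ(x,y)} ν(dy) / Z(x). Then for every Markov kernel κ from X to Y such that ρ is integrable with respect to μ ⊗ κ, one has D_KL(μ ⊗ κ ‖ μ × ν) − s ∫ ρ d(μ ⊗ κ) ≥ − ∫_X log Z(x) μ(dx), and if ρ is integrable with respect to μ ⊗ κ* then equality holds for κ = κ*, i.e. D_KL(μ ⊗ κ* ‖ μ × ν) − s ∫ ρ d(μ ⊗ κ*) = − ∫_X log Z(x) μ(dx). In particular κ* minimizes the Lagrangian functional κ ↦ D_KL(μ ⊗ κ ‖ μ × ν) −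 s ∫ ρ d(μ ⊗ κ). -/
open MeasureTheory ProbabilityTheory Filter Topology Classical
open scoped ENNReal NNReal

/-- The Kullback-Leibler divergence `D_KL(P ‖ Q)`, valued in `[0,∞]`. -/
noncomputable def klDiv {Z : Type*} [MeasurableSpace Z] (P Q : Measure Z) : ℝ≥0∞ :=
  if P ≪ Q ∧ Integrable (MeasureTheory.llr P Q) P
  then ENNReal.ofReal (∫ z, MeasureTheory.llr P Q z ∂P) else ⊤

/-!
Write `Q = μ × ν` and `g(x, y) = s ρ(x, y) - log Z(x)`. Since `Z(x) ∈ (0, ∞)` for a.e. `x`, the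
measure `μ ⊗ κ*` is `e^g Q`, a probability measure, i.e. the exponential tilt of `Q` by `g`.
Moving the reference measure of a Kullback–Leibler divergence from `Q` to its tilt shifts it by
`∫ g dP`, so for every Markov kernel `κ`, with `P = μ ⊗ κ`,
`D(P ‖ Q) - s ∫ ρ dP = D(P ‖ μ ⊗ κ*) - ∫ log Z dμ`.
Gibbs' inequality `D ≥ 0` gives the lower bound, and `D(μ ⊗ κ* ‖ μ ⊗ κ*) = 0` the equality.
-/

open Real

section KullbackLeibler

variable {α : Type*} [MeasurableSpace α] {P Q : Measure α} {g : α → ℝ}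

lemma coe_klDiv_of_ac_of_integrable [IsProbabilityMeasure P] [IsProbabilityMeasure Q]
    (hPQ : P ≪ Q) (h_int : Integrable (llr P Q) P) :
    (klDiv P Q : EReal) = ∫ x, llr P Q x ∂P := by
  have h_nonneg : 0 ≤ ∫ x, llr P Q x ∂P := by
    simpa using InformationTheory.integral_llr_add_sub_measure_univ_nonneg hPQ h_int
  rw [klDiv, if_pos ⟨hPQ, h_int⟩, EReal.coe_ennreal_ofReal, max_eq_left h_nonneg]

lemma klDiv_self (P : Measure α) [SigmaFinite P] : klDiv P P = 0 := by
  rw [klDiv, if_pos ⟨.rfl, (integrable_zero _ _ _).congr (llr_self P).symm⟩,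
    integral_congr_ae (llr_self P)]
  simp

lemma coe_klDiv_eq_klDiv_tilted_add [IsProbabilityMeasure P] [IsProbabilityMeasure Q]
    (hgP : Integrable g P) (hgQ : Integrable (fun x ↦ exp (g x)) Q) :
    (klDiv P Q : EReal) =
      klDiv P (Q.tilted g) + ((∫ x, g x ∂P - log (∫ x, exp (g x) ∂Q) : ℝ) : EReal) := by
  have := isProbabilityMeasure_tilted hgQ
  have h_int (hPQ : P ≪ Q) :
      Integrable (llr P Q) P ↔ Integrable (llr P (Q.tilted g)) P := by
    refine ⟨fun h ↦ integrable_llr_tilted_right hPQ hgP h hgQ, fun h ↦ ?_⟩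
    refine ((h.add hgP).sub (integrable_const (log (∫ x, exp (g x) ∂Q)))).congr ?_
    filter_upwards [llr_tilted_right hPQ hgQ] with x hx
    simp only [Pi.add_apply, Pi.sub_apply, hx]
    ring
  have h_ac : P ≪ Q ↔ P ≪ Q.tilted g :=
    ⟨fun h ↦ h.trans (absolutelyContinuous_tilted hgQ),
      fun h ↦ h.trans (tilted_absolutelyContinuous Q g)⟩
  by_cases h_fin : P ≪ Q ∧ Integrable (llr P Q) P
  · obtain ⟨hPQ, hllr⟩ := h_fin
    rw [coe_klDiv_of_ac_of_integrable hPQ hllr,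
      coe_klDiv_of_ac_of_integrable (h_ac.mp hPQ) ((h_int hPQ).mp hllr),
      integral_llr_tilted_right hPQ hgP hgQ hllr, ← EReal.coe_add]
    congr 1
    ring
  · have h_fin' : ¬(P ≪ Q.tilted g ∧ Integrable (llr P (Q.tilted g)) P) := fun h ↦
      h_fin ⟨h_ac.mpr h.1, (h_int (h_ac.mpr h.1)).mpr h.2⟩
    rw [klDiv, klDiv, if_neg h_fin, if_neg h_fin', EReal.coe_ennreal_top, EReal.top_add_coe]

lemma lintegral_ofReal_exp_eq_one
    [IsProbabilityMeasure (Q.withDensity fun x ↦ ENNReal.ofReal (exp (g x)))] :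
    ∫⁻ x, ENNReal.ofReal (exp (g x)) ∂Q = 1 := by
  rw [← setLIntegral_univ, ← withDensity_apply _ MeasurableSet.univ, measure_univ]

lemma integrable_exp_of_isProbabilityMeasure_withDensity (hg : AEMeasurable g Q)
    [IsProbabilityMeasure (Q.withDensity fun x ↦ ENNReal.ofReal (exp (g x)))] :
    Integrable (fun x ↦ exp (g x)) Q := by
  refine ⟨(measurable_exp.comp_aemeasurable hg).aestronglyMeasurable, ?_⟩
  rw [hasFiniteIntegral_iff_ofReal (ae_of_all _ fun x ↦ (exp_pos (g x)).le),
    lintegral_ofReal_exp_eq_one]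
  exact ENNReal.one_lt_top

lemma integral_exp_eq_one_of_isProbabilityMeasure_withDensity (hg : AEMeasurable g Q)
    [IsProbabilityMeasure (Q.withDensity fun x ↦ ENNReal.ofReal (exp (g x)))] :
    ∫ x, exp (g x) ∂Q = 1 := by
  rw [integral_eq_lintegral_of_nonneg_ae (ae_of_all _ fun x ↦ (exp_pos (g x)).le)
    (measurable_exp.comp_aemeasurable hg).aestronglyMeasurable, lintegral_ofReal_exp_eq_one]
  simp

lemma tilted_eq_withDensity_exp (hg : AEMeasurable g Q)
    [IsProbabilityMeasure (Q.withDensity fun x ↦ ENNReal.ofReal (exp (g x)))] :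
    Q.tilted g = Q.withDensity fun x ↦ ENNReal.ofReal (exp (g x)) := by
  simp [Measure.tilted, integral_exp_eq_one_of_isProbabilityMeasure_withDensity hg]

lemma coe_klDiv_eq_klDiv_withDensity_exp_add [IsProbabilityMeasure P] [IsProbabilityMeasure Q]
    (hg : AEMeasurable g Q) (hgP : Integrable g P)
    [IsProbabilityMeasure (Q.withDensity fun x ↦ ENNReal.ofReal (exp (g x)))] :
    (klDiv P Q : EReal) =
      klDiv P (Q.withDensity fun x ↦ ENNReal.ofReal (exp (g x))) + ((∫ x, g x ∂P : ℝ) : EReal) := by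
  rw [← tilted_eq_withDensity_exp hg,
    coe_klDiv_eq_klDiv_tilted_add hgP (integrable_exp_of_isProbabilityMeasure_withDensity hg),
    integral_exp_eq_one_of_isProbabilityMeasure_withDensity hg, log_one, sub_zero]

end KullbackLeibler

lemma EReal.add_coe_sub_sub_coe {x : EReal} (hx : x ≠ ⊥) (a b : ℝ) :
    x + ((a - b : ℝ) : EReal) - a = x - b := by
  induction x using EReal.rec with
  | bot => exact absurd rfl hx
  | coe x =>
    rw [← EReal.coe_add, ← EReal.coe_sub, ← EReal.coe_sub]
    congr 1
    ring
  | top => rw [EReal.top_add_coe, EReal.top_sub_coe, EReal.top_sub_coe]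

lemma ENNReal.ofReal_exp_div (a : ℝ) {z : ℝ≥0∞} (h0 : z ≠ 0) (h_top : z ≠ ∞) :
    ENNReal.ofReal (exp a) / z = ENNReal.ofReal (exp (a - Real.log z.toReal)) := by
  rw [exp_sub, Real.exp_log (ENNReal.toReal_pos h0 h_top), ENNReal.ofReal_div_of_pos
    (ENNReal.toReal_pos h0 h_top), ENNReal.ofReal_toReal h_top]

section CompProd

variable {α β : Type*} [MeasurableSpace α] [MeasurableSpace β] {μ : Measure α} {κ : Kernel α β}

lemma compProd_eq_withDensity_prod [SFinite μ] {ν : Measure β} [SFinite ν] [IsSFiniteKernel κ]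
    {f : α × β → ℝ≥0∞} (hf : Measurable f)
    (hκ : ∀ᵐ x ∂μ, κ x = ν.withDensity fun y ↦ f (x, y)) :
    μ ⊗ₘ κ = (μ.prod ν).withDensity f := by
  ext t ht
  calc (μ ⊗ₘ κ) t = ∫⁻ x, κ x (Prod.mk x ⁻¹' t) ∂μ := Measure.compProd_apply ht
    _ = ∫⁻ x, ∫⁻ y, t.indicator f (x, y) ∂ν ∂μ := by
      refine lintegral_congr_ae (hκ.mono fun x hx ↦ ?_)
      dsimp only
      rw [hx, withDensity_apply _ (measurable_prodMk_left ht),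
        ← lintegral_indicator (measurable_prodMk_left ht)]
      rfl
    _ = (μ.prod ν).withDensity f t := by
      rw [withDensity_apply _ ht, ← lintegral_indicator ht,
        lintegral_prod _ (hf.indicator ht).aemeasurable]

lemma integrable_comp_fst_compProd [SFinite μ] [IsMarkovKernel κ] {f : α → ℝ}
    (hf : Integrable f μ) : Integrable (fun p ↦ f p.1) (μ ⊗ₘ κ) := by
  rw [← Measure.fst_compProd μ κ] at hf
  exact hf.comp_measurable measurable_fst

lemma integral_comp_fst_compProd [SFinite μ] [IsMarkovKernel κ] {f : α → ℝ}
    (hf : AEStronglyMeasurable f μ) : ∫ p, f p.1 ∂(μ ⊗ₘ κ) = ∫ x, f x ∂μ := by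
  rw [← Measure.fst_compProd μ κ] at hf
  calc ∫ p, f p.1 ∂(μ ⊗ₘ κ) = ∫ x, f x ∂(μ ⊗ₘ κ).fst :=
        (integral_map measurable_fst.aemeasurable hf).symm
    _ = ∫ x, f x ∂μ := by rw [Measure.fst_compProd]

end CompProd

theorem stmt_9_general
    {X Y : Type*}
    [MeasurableSpace X] [MeasurableSpace Y]
    (μ : Measure X) [IsProbabilityMeasure μ] (ν : Measure Y) [IsProbabilityMeasure ν]
    (s : ℝ) (ρ : X × Y → ℝ) (hρ : Measurable ρ)
    -- the normalizing constant `Z(x) = ∫ e^{s ρ(x,y)} ν(dy)`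
    (Z : X → ℝ≥0∞)
    (hZ : ∀ x, Z x = ∫⁻ y, ENNReal.ofReal (Real.exp (s * ρ (x, y))) ∂ν)
    (hZpos : ∀ᵐ x ∂μ, 0 < Z x ∧ Z x < ⊤)
    (hZlog : Integrable (fun x => Real.log (Z x).toReal) μ)
    -- `κ*` is the exponential tilting of `ν` by `s ρ(x, ·)`, normalized by `Z x`
    (κstar : ProbabilityTheory.Kernel X Y) [IsMarkovKernel κstar]
    (hκstar : ∀ᵐ x ∂μ,
      κstar x = ν.withDensity fun y => ENNReal.ofReal (Real.exp (s * ρ (x, y))) / Z x) :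
    (∀ κ : ProbabilityTheory.Kernel X Y, IsMarkovKernel κ →
      Integrable ρ (μ ⊗ₘ κ) →
      ((- ∫ x, Real.log (Z x).toReal ∂μ : ℝ) : EReal) ≤
        (klDiv (μ ⊗ₘ κ) (μ.prod ν) : EReal) - ((s * ∫ p, ρ p ∂(μ ⊗ₘ κ) : ℝ) : EReal)) ∧
    (Integrable ρ (μ ⊗ₘ κstar) →
      (klDiv (μ ⊗ₘ κstar) (μ.prod ν) : EReal) -
          ((s * ∫ p, ρ p ∂(μ ⊗ₘ κstar) : ℝ) : EReal) =
        ((- ∫ x, Real.log (Z x).toReal ∂μ : ℝ) : EReal)) := by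
  set g : X × Y → ℝ := fun p ↦ s * ρ p - log (Z p.1).toReal
  have hZ_meas : Measurable Z := by
    rw [funext hZ]
    exact ((hρ.const_mul s).exp.ennreal_ofReal).lintegral_prod_right'
  have hg : Measurable g := (hρ.const_mul s).sub (hZ_meas.ennreal_toReal.log.comp measurable_fst)
  have h_star : μ ⊗ₘ κstar = (μ.prod ν).withDensity fun p ↦ ENNReal.ofReal (exp (g p)) := by
    refine compProd_eq_withDensity_prod hg.exp.ennreal_ofReal ?_
    filter_upwards [hκstar, hZpos] with x hx hZx
    simp_rw [hx, ENNReal.ofReal_exp_div _ hZx.1.ne' hZx.2.ne, g]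
  have : IsProbabilityMeasure ((μ.prod ν).withDensity fun p ↦ ENNReal.ofReal (exp (g p))) :=
    h_star ▸ inferInstance
  have h_lagrangian (κ : Kernel X Y) [IsMarkovKernel κ] (hρκ : Integrable ρ (μ ⊗ₘ κ)) :
      (klDiv (μ ⊗ₘ κ) (μ.prod ν) : EReal) - ((s * ∫ p, ρ p ∂(μ ⊗ₘ κ) : ℝ) : EReal) =
        klDiv (μ ⊗ₘ κ) (μ ⊗ₘ κstar) - ((∫ x, log (Z x).toReal ∂μ : ℝ) : EReal) := by
    have hlogZ := integrable_comp_fst_compProd (κ := κ) hZlog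
    rw [coe_klDiv_eq_klDiv_withDensity_exp_add hg.aemeasurable
      ((hρκ.const_mul s).sub hlogZ), ← h_star, integral_sub (hρκ.const_mul s) hlogZ,
      integral_const_mul, integral_comp_fst_compProd hZlog.1,
      EReal.add_coe_sub_sub_coe (EReal.coe_ennreal_ne_bot _)]
  refine ⟨fun κ _ hρκ ↦ ?_, fun hρκ ↦ ?_⟩
  · rw [h_lagrangian κ hρκ, EReal.coe_neg, ← zero_sub]
    exact EReal.sub_le_sub (EReal.coe_ennreal_nonneg _) le_rfl
  · rw [h_lagrangian κstar hρκ, klDiv_self, EReal.coe_ennreal_zero, zero_sub, EReal.coe_neg]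

/-- the exponentially tilted kernel
`κ*(x)(dy) = e^{s ρ(x,y)} ν(dy) / Z(x)` minimizes the Lagrangian
`κ ↦ D_KL(μ ⊗ κ ‖ μ × ν) - s ∫ ρ d(μ ⊗ κ)` over Markov kernels, with minimum value
`-∫ log Z dμ`.  The inequality and the equality for `κ*` are stated in the extended reals. -/
theorem stmt_9
    {X Y : Type*}
    [TopologicalSpace X] [PolishSpace X] [MeasurableSpace X] [BorelSpace X]
    [TopologicalSpace Y] [PolishSpace Y] [MeasurableSpace Y] [BorelSpace Y]
    (μ : Measure X) [IsProbabilityMeasure μ] (ν : Measure Y) [IsProbabilityMeasure ν]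
    (s : ℝ) (ρ : X × Y → ℝ) (hρ : Measurable ρ)
    -- the normalizing constant `Z(x) = ∫ e^{s ρ(x,y)} ν(dy)`
    (Z : X → ℝ≥0∞)
    (hZ : ∀ x, Z x = ∫⁻ y, ENNReal.ofReal (Real.exp (s * ρ (x, y))) ∂ν)
    (hZpos : ∀ᵐ x ∂μ, 0 < Z x ∧ Z x < ⊤)
    (hZlog : Integrable (fun x => Real.log (Z x).toReal) μ)
    -- `κ*` is the exponential tilting of `ν` by `s ρ(x, ·)`, normalized by `Z x`
    (κstar : ProbabilityTheory.Kernel X Y) [IsMarkovKernel κstar]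
    (hκstar : ∀ᵐ x ∂μ,
      κstar x = ν.withDensity fun y => ENNReal.ofReal (Real.exp (s * ρ (x, y))) / Z x) :
    (∀ κ : ProbabilityTheory.Kernel X Y, IsMarkovKernel κ →
      Integrable ρ (μ ⊗ₘ κ) →
      ((- ∫ x, Real.log (Z x).toReal ∂μ : ℝ) : EReal) ≤
        (klDiv (μ ⊗ₘ κ) (μ.prod ν) : EReal) - ((s * ∫ p, ρ p ∂(μ ⊗ₘ κ) : ℝ) : EReal)) ∧
    (Integrable ρ (μ ⊗ₘ κstar) →
      (klDiv (μ ⊗ₘ κstar) (μ.prod ν) : EReal) -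
          ((s * ∫ p, ρ p ∂(μ ⊗ₘ κstar) : ℝ) : EReal) =
        ((- ∫ x, Real.log (Z x).toReal ∂μ : ℝ) : EReal)) :=
  stmt_9_general μ ν s ρ hρ Z hZ hZpos hZlog κstar hκstar
end

section
/- Let 𝒳_0,…,𝒳_n and 𝒴_0,…,𝒴_n be Polish spaces, X = ∏_{i=0}^n 𝒳_i, Y = ∏_{i=0}^n 𝒴_i, and μ a Borel probability measure on X. If π₁ and π₂ are Borel probability measures on X × Y, each with first marginal equal to μ and each nonanticipative, then for every λ ∈ [0, 1] the mixture λ π₁ + (1−λ) π₂ also has first marginal μ and is nonanticipative; that is, the set of nonanticipative joint probability measures with fixed source marginal μ is convex. -/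
/-! Both components have the `X`-marginal `μ`, so they agree on the σ-algebra generated by `X`,
which contains the conditioning σ-algebra `σ(X_0,…,X_i)` as well as `σ(X_{i+1})`. Hence, given
`σ(X_0,…,X_i)`, the conditional expectation under the mixture is the mixture of the conditional
expectations, and an event `B ∈ σ(X_{i+1})` has the same conditional probability `g` under `π₁`
and `π₂`. The product rule `P(A ∩ B | 𝒢) = P(A | 𝒢) g` is linear in its `A`-factor once the
`B`-factor is the common `g`, so it passes to the mixture. -/

open MeasureTheory ProbabilityTheory MeasurableSpace
open scoped ENNReal NNReal

/-- A joint probability measure `π` on `(∏ i ≤ n, 𝒳 i) × (∏ i ≤ n, 𝒴 i)` is nonanticipative if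
for every `i < n` the σ-algebra generated by the coordinates `(Y_0,…,Y_i)` and the σ-algebra
generated by the coordinate `X_{i+1}` are conditionally independent given the σ-algebra
generated by the coordinates `(X_0,…,X_i)`. -/
def Nonanticipative (n : ℕ) (𝒳 𝒴 : ℕ → Type*)
    [∀ i, MeasurableSpace (𝒳 i)] [∀ i, TopologicalSpace (𝒳 i)]
    [∀ i, PolishSpace (𝒳 i)] [∀ i, BorelSpace (𝒳 i)] [∀ i, Nonempty (𝒳 i)]
    [∀ i, MeasurableSpace (𝒴 i)] [∀ i, TopologicalSpace (𝒴 i)]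
    [∀ i, PolishSpace (𝒴 i)] [∀ i, BorelSpace (𝒴 i)] [∀ i, Nonempty (𝒴 i)]
    (π : Measure ((∀ j : Fin (n+1), 𝒳 j) × (∀ j : Fin (n+1), 𝒴 j)))
    [IsFiniteMeasure π] : Prop :=
  ∀ i : ℕ, ∀ hi : i < n,
    CondIndep
      (⨆ j : Fin (n+1), ⨆ _ : (j : ℕ) ≤ i,
        MeasurableSpace.comap
          (fun p : (∀ j : Fin (n+1), 𝒳 j) × (∀ j : Fin (n+1), 𝒴 j) => p.1 j) inferInstance)
      (⨆ j : Fin (n+1), ⨆ _ : (j : ℕ) ≤ i,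
        MeasurableSpace.comap
          (fun p : (∀ j : Fin (n+1), 𝒳 j) × (∀ j : Fin (n+1), 𝒴 j) => p.2 j) inferInstance)
      (MeasurableSpace.comap
        (fun p : (∀ j : Fin (n+1), 𝒳 j) × (∀ j : Fin (n+1), 𝒴 j) => p.1 ⟨i + 1, by omega⟩)
        inferInstance)
      (iSup_le fun j => iSup_le fun _ =>
        ((measurable_pi_apply j).comp measurable_fst).comap_le)
      π

namespace MeasureTheory

section TrimEq

variable {α E : Type*} {m m₀ : MeasurableSpace α} {μ₁ μ₂ : Measure α}
  [NormedAddCommGroup E] {f g : α → E}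

lemma Measure.trim_smul (hm : m ≤ m₀) (μ : Measure α) (c : ℝ≥0) :
    (c • μ).trim hm = c • μ.trim hm :=
  @Measure.ext _ m _ _ fun s hs ↦ by simp [trim_measurableSet_eq hm hs]

lemma Measure.trim_smul_add_smul_of_trim_eq (hm : m ≤ m₀) (h : μ₁.trim hm = μ₂.trim hm)
    {a b : ℝ≥0} (hab : a + b = 1) : (a • μ₁ + b • μ₂).trim hm = μ₁.trim hm := by
  rw [trim_add, trim_smul, trim_smul, ← h, ← add_smul, hab, one_smul]

lemma Measure.trim_comap_eq_of_map_eq {β : Type*} {mβ : MeasurableSpace β} {φ : α → β}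
    (hφ : Measurable φ) (h : μ₁.map φ = μ₂.map φ) :
    μ₁.trim hφ.comap_le = μ₂.trim hφ.comap_le := by
  refine @Measure.ext _ (mβ.comap φ) _ _ ?_
  rintro _ ⟨t, ht, rfl⟩
  rw [trim_comap_apply hφ ht, trim_comap_apply hφ ht, h]

lemma ae_eq_of_trim_eq (hm : m ≤ m₀) (h : μ₁.trim hm = μ₂.trim hm)
    (hf : StronglyMeasurable[m] f) (hg : StronglyMeasurable[m] g) (hfg : f =ᵐ[μ₁] g) :
    f =ᵐ[μ₂] g :=
  (hf.ae_eq_trim_iff hm hg).1 (h ▸ (hf.ae_eq_trim_iff hm hg).2 hfg)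

lemma integrable_of_trim_eq (hm : m ≤ m₀) (h : μ₁.trim hm = μ₂.trim hm)
    (hf : StronglyMeasurable[m] f) (hfi : Integrable f μ₁) : Integrable f μ₂ :=
  integrable_of_integrable_trim hm (h ▸ hfi.trim hm hf)

lemma setIntegral_eq_of_trim_eq [NormedSpace ℝ E] (hm : m ≤ m₀) (h : μ₁.trim hm = μ₂.trim hm)
    (hf : StronglyMeasurable[m] f) {s : Set α} (hs : MeasurableSet[m] s) :
    ∫ x in s, f x ∂μ₁ = ∫ x in s, f x ∂μ₂ := by
  rw [setIntegral_trim hm hf hs, h, ← setIntegral_trim hm hf hs]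

lemma integral_smul_add_smul_measure [NormedSpace ℝ E] {a b : ℝ≥0}
    (h₁ : Integrable f μ₁) (h₂ : Integrable f μ₂) :
    ∫ x, f x ∂(a • μ₁ + b • μ₂) = (a : ℝ) • ∫ x, f x ∂μ₁ + (b : ℝ) • ∫ x, f x ∂μ₂ := by
  rw [integral_add_measure (h₁.smul_measure_nnreal) (h₂.smul_measure_nnreal),
    integral_smul_nnreal_measure, integral_smul_nnreal_measure, NNReal.smul_def, NNReal.smul_def]

variable [NormedSpace ℝ E] [CompleteSpace E]

lemma condExp_ae_eq_of_trim_eq {mF : MeasurableSpace α} (hmF : m ≤ mF) (hF : mF ≤ m₀)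
    [IsFiniteMeasure μ₁] [IsFiniteMeasure μ₂] (h : μ₁.trim hF = μ₂.trim hF)
    (hf : StronglyMeasurable[mF] f) (hfi : Integrable f μ₁) :
    μ₁[f|m] =ᵐ[μ₂] μ₂[f|m] := by
  have hm₀ : m ≤ m₀ := hmF.trans hF
  have hm : μ₁.trim hm₀ = μ₂.trim hm₀ := by
    rw [← trim_trim (hm₁₂ := hmF) (hm₂ := hF), h, trim_trim]
  refine ae_eq_condExp_of_forall_setIntegral_eq hm₀ (integrable_of_trim_eq hF h hf hfi)
    (fun s _ _ ↦ (integrable_of_trim_eq hm₀ hm stronglyMeasurable_condExp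
      integrable_condExp).integrableOn) (fun s hs _ ↦ ?_)
    stronglyMeasurable_condExp.aestronglyMeasurable
  rw [← setIntegral_eq_of_trim_eq hm₀ hm stronglyMeasurable_condExp hs,
    setIntegral_condExp hm₀ hfi hs, setIntegral_eq_of_trim_eq hF h hf (hmF s hs)]

lemma condExp_smul_add_smul_ae_eq (hm : m ≤ m₀) [IsFiniteMeasure μ₁] [IsFiniteMeasure μ₂]
    (h : μ₁.trim hm = μ₂.trim hm) {a b : ℝ≥0} (hab : a + b = 1)
    (hf₁ : Integrable f μ₁) (hf₂ : Integrable f μ₂) :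
    (a • μ₁ + b • μ₂)[f|m] =ᵐ[a • μ₁ + b • μ₂] (a : ℝ) • μ₁[f|m] + (b : ℝ) • μ₂[f|m] := by
  set μ := a • μ₁ + b • μ₂
  have hμ : μ.trim hm = μ₁.trim hm := Measure.trim_smul_add_smul_of_trim_eq hm h hab
  have hg : StronglyMeasurable[m] ((a : ℝ) • μ₁[f|m] + (b : ℝ) • μ₂[f|m]) :=
    (stronglyMeasurable_condExp.const_smul _).add (stronglyMeasurable_condExp.const_smul _)
  have hcond₂ : Integrable (μ₂[f|m]) μ₁ :=
    integrable_of_trim_eq hm h.symm stronglyMeasurable_condExp integrable_condExp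
  refine (ae_eq_condExp_of_forall_setIntegral_eq hm
    ((hf₁.smul_measure_nnreal).add_measure (hf₂.smul_measure_nnreal))
    (fun s _ _ ↦ ?_) (fun s hs _ ↦ ?_) hg.aestronglyMeasurable).symm
  · refine (integrable_of_trim_eq hm hμ.symm hg ?_).integrableOn
    exact (integrable_condExp.smul _).add (hcond₂.smul _)
  · rw [setIntegral_eq_of_trim_eq hm hμ hg hs, Measure.restrict_add, Measure.restrict_smul,
      Measure.restrict_smul, integral_smul_add_smul_measure hf₁.restrict hf₂.restrict]
    rw [integral_add' (integrable_condExp.smul (a : ℝ)).restrict (hcond₂.smul (b : ℝ)).restrict]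
    simp only [Pi.smul_apply]
    rw [integral_smul, integral_smul,
      setIntegral_eq_of_trim_eq hm h (stronglyMeasurable_condExp (μ := μ₂)) hs,
      setIntegral_condExp hm hf₁ hs, setIntegral_condExp hm hf₂ hs]

end TrimEq

end MeasureTheory

namespace ProbabilityTheory

theorem CondIndep.smul_add_smul {Ω : Type*} {m' m₁ m₂ mF : MeasurableSpace Ω}
    {mΩ : MeasurableSpace Ω} [StandardBorelSpace Ω] {hm' : m' ≤ mΩ}
    (hm'F : m' ≤ mF) (hm₂F : m₂ ≤ mF) (hF : mF ≤ mΩ) (hm₁ : m₁ ≤ mΩ)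
    {μ₁ μ₂ : Measure Ω} [IsFiniteMeasure μ₁] [IsFiniteMeasure μ₂]
    (htrim : μ₁.trim hF = μ₂.trim hF) {a b : ℝ≥0} (hab : a + b = 1)
    (h₁ : CondIndep m' m₁ m₂ hm' μ₁) (h₂ : CondIndep m' m₁ m₂ hm' μ₂) :
    CondIndep m' m₁ m₂ hm' (a • μ₁ + b • μ₂) := by
  have hm₂ : m₂ ≤ mΩ := hm₂F.trans hF
  rw [condIndep_iff _ _ _ hm' hm₁ hm₂] at h₁ h₂ ⊢
  intro A B hA hB
  have h₁₂ : μ₁.trim hm' = μ₂.trim hm' := by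
    rw [← trim_trim (hm₁₂ := hm'F) (hm₂ := hF), htrim, trim_trim]
  have hμ₁ : (a • μ₁ + b • μ₂).trim hm' = μ₁.trim hm' :=
    Measure.trim_smul_add_smul_of_trim_eq hm' h₁₂ hab
  have hμ₂ : (a • μ₁ + b • μ₂).trim hm' = μ₂.trim hm' := hμ₁.trans h₁₂
  have hint : ∀ (μ : Measure Ω) [IsFiniteMeasure μ] {s : Set Ω}, MeasurableSet s →
      Integrable (s.indicator fun _ ↦ (1 : ℝ)) μ :=
    fun _ _ _ hs ↦ (integrable_const 1).indicator hs
  have hmix : ∀ {s : Set Ω}, MeasurableSet s → _ := fun hs ↦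
    condExp_smul_add_smul_ae_eq hm' h₁₂ hab (hint μ₁ hs) (hint μ₂ hs)
  have hB₁₂ : μ₂⟦B|m'⟧ =ᵐ[a • μ₁ + b • μ₂] μ₁⟦B|m'⟧ :=
    ae_eq_of_trim_eq hm' hμ₂.symm stronglyMeasurable_condExp stronglyMeasurable_condExp
      (condExp_ae_eq_of_trim_eq hm'F hF htrim (stronglyMeasurable_const.indicator (hm₂F B hB))
        (hint μ₁ (hm₂ B hB))).symm
  have hprod₁ := ae_eq_of_trim_eq hm' hμ₁.symm stronglyMeasurable_condExp
    (stronglyMeasurable_condExp.mul stronglyMeasurable_condExp) (h₁ A B hA hB)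
  have hprod₂ := ae_eq_of_trim_eq hm' hμ₂.symm stronglyMeasurable_condExp
    (stronglyMeasurable_condExp.mul stronglyMeasurable_condExp) (h₂ A B hA hB)
  filter_upwards [hmix ((hm₁ A hA).inter (hm₂ B hB)), hmix (hm₁ A hA), hmix (hm₂ B hB),
    hprod₁, hprod₂, hB₁₂] with x hAB hA hB hp₁ hp₂ hB₂
  simp only [Pi.add_apply, Pi.smul_apply, Pi.mul_apply, smul_eq_mul] at *
  have hab' : (a : ℝ) + b = 1 := by exact_mod_cast hab
  rw [hAB, hA, hB, hp₁, hp₂, hB₂]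
  linear_combination (-((a : ℝ) * (μ₁⟦A|m'⟧) x + b * (μ₂⟦A|m'⟧) x) * (μ₁⟦B|m'⟧) x) * hab'

end ProbabilityTheory

theorem stmt_12_general (n : ℕ) (𝒳 𝒴 : ℕ → Type*)
    [∀ i, MeasurableSpace (𝒳 i)] [∀ i, TopologicalSpace (𝒳 i)]
    [∀ i, PolishSpace (𝒳 i)] [∀ i, BorelSpace (𝒳 i)] [∀ i, Nonempty (𝒳 i)]
    [∀ i, MeasurableSpace (𝒴 i)] [∀ i, TopologicalSpace (𝒴 i)]
    [∀ i, PolishSpace (𝒴 i)] [∀ i, BorelSpace (𝒴 i)] [∀ i, Nonempty (𝒴 i)]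
    (μ : Measure (∀ j : Fin (n+1), 𝒳 j))
    (π₁ π₂ : Measure ((∀ j : Fin (n+1), 𝒳 j) × (∀ j : Fin (n+1), 𝒴 j)))
    [IsProbabilityMeasure π₁] [IsProbabilityMeasure π₂]
    (h₁fst : π₁.map Prod.fst = μ) (h₂fst : π₂.map Prod.fst = μ)
    (h₁ : Nonanticipative n 𝒳 𝒴 π₁) (h₂ : Nonanticipative n 𝒳 𝒴 π₂)
    (lam : ℝ≥0) (hlam : lam ≤ 1) :
    (lam • π₁ + (1 - lam) • π₂).map Prod.fst = μ ∧
      Nonanticipative n 𝒳 𝒴 (lam • π₁ + (1 - lam) • π₂) := by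
  have hlam' : lam + (1 - lam) = 1 := add_tsub_cancel_of_le hlam
  refine ⟨?_, fun i hi ↦ ?_⟩
  · rw [Measure.map_add _ _ measurable_fst, Measure.map_smul, Measure.map_smul, h₁fst, h₂fst,
      ← add_smul, hlam', one_smul]
  have hX : ∀ j : Fin (n+1), MeasurableSpace.comap
      (fun p : (∀ j : Fin (n+1), 𝒳 j) × (∀ j : Fin (n+1), 𝒴 j) ↦ p.1 j) inferInstance ≤
        MeasurableSpace.comap Prod.fst inferInstance :=
    fun j ↦ ((measurable_pi_apply j).comp (comap_measurable Prod.fst)).comap_le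
  exact (h₁ i hi).smul_add_smul (iSup_le fun j ↦ iSup_le fun _ ↦ hX j) (hX _)
    measurable_fst.comap_le
    (iSup_le fun j ↦ iSup_le fun _ ↦ ((measurable_pi_apply j).comp measurable_snd).comap_le)
    (Measure.trim_comap_eq_of_map_eq measurable_fst (h₁fst.trans h₂fst.symm)) hlam' (h₂ i hi)

/-- the set of nonanticipative joint probability measures with fixed source
marginal `μ` is convex. -/
theorem stmt_12 (n : ℕ) (hn : 1 ≤ n) (𝒳 𝒴 : ℕ → Type*)
    [∀ i, MeasurableSpace (𝒳 i)] [∀ i, TopologicalSpace (𝒳 i)]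
    [∀ i, PolishSpace (𝒳 i)] [∀ i, BorelSpace (𝒳 i)] [∀ i, Nonempty (𝒳 i)]
    [∀ i, MeasurableSpace (𝒴 i)] [∀ i, TopologicalSpace (𝒴 i)]
    [∀ i, PolishSpace (𝒴 i)] [∀ i, BorelSpace (𝒴 i)] [∀ i, Nonempty (𝒴 i)]
    (μ : Measure (∀ j : Fin (n+1), 𝒳 j)) [IsProbabilityMeasure μ]
    (π₁ π₂ : Measure ((∀ j : Fin (n+1), 𝒳 j) × (∀ j : Fin (n+1), 𝒴 j)))
    [IsProbabilityMeasure π₁] [IsProbabilityMeasure π₂]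
    (h₁fst : π₁.map Prod.fst = μ) (h₂fst : π₂.map Prod.fst = μ)
    (h₁ : Nonanticipative n 𝒳 𝒴 π₁) (h₂ : Nonanticipative n 𝒳 𝒴 π₂)
    (lam : ℝ≥0) (hlam : lam ≤ 1) :
    (lam • π₁ + (1 - lam) • π₂).map Prod.fst = μ ∧
      Nonanticipative n 𝒳 𝒴 (lam • π₁ + (1 - lam) • π₂) :=
  stmt_12_general n 𝒳 𝒴 μ π₁ π₂ h₁fst h₂fst h₁ h₂ lam hlam
end
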